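/- arXiv:1811.03996 — 2 statements merged into one kernel-verified Lean document; each statement's English description precedes it below -/
import Mathlib

section
/- Let U ∈ ℂ^{m×m} be unitary, P, Q ⊆ {1,…,m}, and ε_P, ε_Q ∈ [0,1]. Suppose there exist nonzero p, q ∈ ℂ^m with p = U q, ‖p − D_P p‖₂ ≤ ε_P ‖p‖₂, and ‖q − D_Q q‖₂ ≤ ε_Q ‖q‖₂. Then ‖D_P U D_Q U*‖_{2→2} ≥ max(1 − ε_P − ε_Q, 0). -/
open scoped BigOperators Matrix

noncomputable def vnorm2 {m : ℕ} (x : Fin m → ℂ) : ℝ :=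
  Real.sqrt (∑ i, ‖x i‖ ^ 2)

noncomputable def vnorm1 {m : ℕ} (x : Fin m → ℂ) : ℝ :=
  ∑ i, ‖x i‖

noncomputable def opnorm2 {m n : ℕ} (A : Matrix (Fin m) (Fin n) ℂ) : ℝ :=
  sSup {c | ∃ x : Fin n → ℂ, vnorm2 x = 1 ∧ c = vnorm2 (A.mulVec x)}

noncomputable def opnorm1 {m n : ℕ} (A : Matrix (Fin m) (Fin n) ℂ) : ℝ :=
  sSup {c | ∃ x : Fin n → ℂ, vnorm1 x = 1 ∧ c = vnorm1 (A.mulVec x)}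

noncomputable def frobNorm {m n : ℕ} (A : Matrix (Fin m) (Fin n) ℂ) : ℝ :=
  Real.sqrt (∑ i, ∑ j, ‖A i j‖ ^ 2)

def Dmat {m : ℕ} (P : Finset (Fin m)) : Matrix (Fin m) (Fin m) ℂ :=
  Matrix.diagonal (fun i => if i ∈ P then 1 else 0)

noncomputable def dft (m : ℕ) : Matrix (Fin m) (Fin m) ℂ :=
  fun k l => (1 / Real.sqrt m : ℝ) *
    Complex.exp (-2 * Real.pi * Complex.I * (k.1 + 1) * (l.1 + 1) / m)

/-! The defect of `p` under `A = D_P U D_Q Uᴴ` splits as `(p - D_P p) + D_P U (q - D_Q q)` with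
`q = Uᴴ p`, so `‖p - A p‖ ≤ (ε_P + ε_Q) ‖p‖` because `D_P` is a contraction and `U` an isometry.
Hence `‖A p‖ ≥ (1 - ε_P - ε_Q) ‖p‖`, and the operator norm is at least that ratio. -/

open Matrix

section vnorm2

variable {m : ℕ}

lemma vnorm2_eq_norm_toLp (x : Fin m → ℂ) : vnorm2 x = ‖WithLp.toLp 2 x‖ := by
  simp [vnorm2, EuclideanSpace.norm_eq]

lemma vnorm2_nonneg (x : Fin m → ℂ) : 0 ≤ vnorm2 x := Real.sqrt_nonneg _

lemma vnorm2_pos {x : Fin m → ℂ} (hx : x ≠ 0) : 0 < vnorm2 x := by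
  simpa [vnorm2_eq_norm_toLp] using hx

lemma vnorm2_add_le (x y : Fin m → ℂ) : vnorm2 (x + y) ≤ vnorm2 x + vnorm2 y := by
  simpa only [vnorm2_eq_norm_toLp, WithLp.toLp_add] using norm_add_le _ _

lemma vnorm2_sub_vnorm2_le (x y : Fin m → ℂ) : vnorm2 x - vnorm2 y ≤ vnorm2 (x - y) := by
  simpa only [vnorm2_eq_norm_toLp, WithLp.toLp_sub] using norm_sub_norm_le _ _

lemma vnorm2_smul (c : ℂ) (x : Fin m → ℂ) : vnorm2 (c • x) = ‖c‖ * vnorm2 x := by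
  simp only [vnorm2_eq_norm_toLp, WithLp.toLp_smul, norm_smul]

lemma vnorm2_mulVec_of_mem_unitaryGroup {U : Matrix (Fin m) (Fin m) ℂ}
    (hU : U ∈ unitaryGroup (Fin m) ℂ) (x : Fin m → ℂ) : vnorm2 (U *ᵥ x) = vnorm2 x := by
  rw [vnorm2_eq_norm_toLp, vnorm2_eq_norm_toLp, ← toEuclideanCLM_toLp]
  exact ContinuousLinearMap.norm_map_of_mem_unitary
    (Unitary.map_mem (toEuclideanCLM (n := Fin m) (𝕜 := ℂ)) hU) _

lemma vnorm2_diagonal_mulVec_le {d : Fin m → ℂ} (hd : ∀ i, ‖d i‖ ≤ 1) (x : Fin m → ℂ) :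
    vnorm2 (diagonal d *ᵥ x) ≤ vnorm2 x := by
  refine Real.sqrt_le_sqrt (Finset.sum_le_sum fun i _ => ?_)
  rw [mulVec_diagonal, norm_mul]
  gcongr
  exact mul_le_of_le_one_left (norm_nonneg _) (hd i)

lemma vnorm2_dmat_mulVec_le (P : Finset (Fin m)) (x : Fin m → ℂ) :
    vnorm2 (Dmat P *ᵥ x) ≤ vnorm2 x :=
  vnorm2_diagonal_mulVec_le (fun i => by split_ifs <;> simp) x

end vnorm2

section opnorm2

variable {m n : ℕ}

lemma bddAbove_opnorm2_set (A : Matrix (Fin m) (Fin n) ℂ) :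
    BddAbove {c | ∃ x : Fin n → ℂ, vnorm2 x = 1 ∧ c = vnorm2 (A *ᵥ x)} := by
  open scoped Matrix.Norms.L2Operator in
  refine ⟨‖A‖, ?_⟩
  rintro c ⟨x, hx, rfl⟩
  rw [vnorm2_eq_norm_toLp] at hx
  simpa [vnorm2_eq_norm_toLp, hx] using l2_opNorm_mulVec A (WithLp.toLp 2 x)

lemma opnorm2_nonneg (A : Matrix (Fin m) (Fin n) ℂ) : 0 ≤ opnorm2 A :=
  Real.sSup_nonneg fun _ ⟨_, _, hc⟩ => hc ▸ vnorm2_nonneg _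

lemma vnorm2_mulVec_le_opnorm2_mul (A : Matrix (Fin m) (Fin n) ℂ) (x : Fin n → ℂ) :
    vnorm2 (A *ᵥ x) ≤ opnorm2 A * vnorm2 x := by
  rcases eq_or_ne x 0 with rfl | hx
  · simp [vnorm2_eq_norm_toLp]
  have hx' := vnorm2_pos hx
  set c : ℂ := ↑(vnorm2 x)⁻¹
  have hc : ‖c‖ = (vnorm2 x)⁻¹ := by simp [c, hx'.le]
  have hmem : (vnorm2 x)⁻¹ * vnorm2 (A *ᵥ x) ≤ opnorm2 A :=
    le_csSup (bddAbove_opnorm2_set A)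
      ⟨c • x, by rw [vnorm2_smul, hc, inv_mul_cancel₀ hx'.ne'],
        by rw [mulVec_smul, vnorm2_smul, hc]⟩
  rwa [inv_mul_le_iff₀ hx', mul_comm] at hmem

end opnorm2

lemma vnorm2_sub_dmat_conj_mulVec_le {m : ℕ} {U : Matrix (Fin m) (Fin m) ℂ}
    (hU : U ∈ unitaryGroup (Fin m) ℂ) (P Q : Finset (Fin m)) (x : Fin m → ℂ) :
    vnorm2 (x - (Dmat P * (U * Dmat Q * Uᴴ)) *ᵥ x)
      ≤ vnorm2 (x - Dmat P *ᵥ x) + vnorm2 (Uᴴ *ᵥ x - Dmat Q *ᵥ (Uᴴ *ᵥ x)) := by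
  have hUUh : U * Uᴴ = 1 := mem_unitaryGroup_iff.mp hU
  have hsplit : x - (Dmat P * (U * Dmat Q * Uᴴ)) *ᵥ x
      = (x - Dmat P *ᵥ x) + Dmat P *ᵥ (U *ᵥ (Uᴴ *ᵥ x - Dmat Q *ᵥ (Uᴴ *ᵥ x))) := by
    simp only [mulVec_sub, mulVec_mulVec, ← Matrix.mul_assoc, hUUh, Matrix.mul_one]
    abel
  rw [hsplit]
  exact (vnorm2_add_le _ _).trans <| add_le_add le_rfl <|
    (vnorm2_dmat_mulVec_le P _).trans (vnorm2_mulVec_of_mem_unitaryGroup hU _).le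

theorem stmt7_general {m : ℕ} (U : Matrix (Fin m) (Fin m) ℂ)
    (hU : U ∈ Matrix.unitaryGroup (Fin m) ℂ) (P Q : Finset (Fin m))
    (εP εQ : ℝ)
    (p q : Fin m → ℂ) (hp0 : p ≠ 0) (hpq : p = U.mulVec q)
    (hpc : vnorm2 (p - (Dmat P).mulVec p) ≤ εP * vnorm2 p)
    (hqc : vnorm2 (q - (Dmat Q).mulVec q) ≤ εQ * vnorm2 q) :
    opnorm2 (Dmat P * (U * Dmat Q * Uᴴ)) ≥ max (1 - εP - εQ) 0 := by
  set A := Dmat P * (U * Dmat Q * Uᴴ)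
  have hUhU : Uᴴ * U = 1 := mem_unitaryGroup_iff'.mp hU
  have hq : Uᴴ *ᵥ p = q := by rw [hpq, mulVec_mulVec, hUhU, one_mulVec]
  have hqp : vnorm2 q = vnorm2 p := by rw [hpq, vnorm2_mulVec_of_mem_unitaryGroup hU]
  have hdefect : vnorm2 (p - A *ᵥ p) ≤ (εP + εQ) * vnorm2 p := by
    calc _ ≤ _ := vnorm2_sub_dmat_conj_mulVec_le hU P Q p
      _ ≤ εP * vnorm2 p + εQ * vnorm2 q := by rw [hq]; exact add_le_add hpc hqc
      _ = _ := by rw [hqp]; ring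
  have hlower : (1 - εP - εQ) * vnorm2 p ≤ opnorm2 A * vnorm2 p := by
    calc _ ≤ vnorm2 p - vnorm2 (p - A *ᵥ p) := by linarith
      _ ≤ vnorm2 (A *ᵥ p) := by simpa using vnorm2_sub_vnorm2_le p (p - A *ᵥ p)
      _ ≤ _ := vnorm2_mulVec_le_opnorm2_mul A p
  exact max_le (le_of_mul_le_mul_right hlower (vnorm2_pos hp0)) (opnorm2_nonneg A)

theorem stmt7 {m : ℕ} (U : Matrix (Fin m) (Fin m) ℂ)
    (hU : U ∈ Matrix.unitaryGroup (Fin m) ℂ) (P Q : Finset (Fin m))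
    (εP εQ : ℝ) (hεP : εP ∈ Set.Icc (0 : ℝ) 1) (hεQ : εQ ∈ Set.Icc (0 : ℝ) 1)
    (p q : Fin m → ℂ) (hp0 : p ≠ 0) (hq0 : q ≠ 0) (hpq : p = U.mulVec q)
    (hpc : vnorm2 (p - (Dmat P).mulVec p) ≤ εP * vnorm2 p)
    (hqc : vnorm2 (q - (Dmat Q).mulVec q) ≤ εQ * vnorm2 q) :
    opnorm2 (Dmat P * (U * Dmat Q * Uᴴ)) ≥ max (1 - εP - εQ) 0 :=
  stmt7_general U hU P Q εP εQ p q hp0 hpq hpc hqc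
end

section
/- Let A ∈ ℂ^{m×p} and B ∈ ℂ^{m×q} have unit-norm columns with coherences μ(A), μ(B) and mutual coherence μ̄ > 0. If A p = B q with (p,q) ≠ 0, then ‖p‖₀ ‖q‖₀ ≥ [1 + μ(A)(1 − ‖p‖₀)]₊ · [1 + μ(B)(1 − ‖q‖₀)]₊ / μ̄². -/
open scoped BigOperators Matrix

noncomputable def norm0 {m : ℕ} (x : Fin m → ℂ) : ℕ :=
  (Finset.univ.filter (fun i => x i ≠ 0)).card

/-!
Put `s = A p = B q`. The energy `‖s‖² = p* (AᴴA) p` is bounded below, by the coherence of `A`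
and Cauchy–Schwarz on the support of `p`, so that
`[1 + μ(A)(1 − ‖p‖₀)] ‖p‖₁² ≤ ‖p‖₀ ‖s‖²`; likewise for `B` and `q`. Writing the same energy
as `p* (AᴴB) q` bounds it above by `μ̄ ‖p‖₁ ‖q‖₁`. Multiplying the two lower bounds and
comparing with the square of the upper one gives the claim.
-/

open Matrix

section Bilinear

variable {ι κ l : Type*} [Fintype ι] [Fintype κ]

lemma re_star_dotProduct_self (v : ι → ℂ) : (star v ⬝ᵥ v).re = ∑ i, ‖v i‖ ^ 2 := by
  simp only [dotProduct, Pi.star_apply, Complex.re_sum, RCLike.star_def, Complex.conj_mul',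
    ← Complex.ofReal_pow, Complex.ofReal_re]

lemma star_mulVec_dotProduct_mulVec [Fintype l] (A : Matrix l ι ℂ) (B : Matrix l κ ℂ)
    (v : ι → ℂ) (w : κ → ℂ) :
    star (A *ᵥ v) ⬝ᵥ (B *ᵥ w) = star v ⬝ᵥ ((Aᴴ * B) *ᵥ w) := by
  rw [dotProduct_mulVec, star_mulVec, vecMul_vecMul, ← dotProduct_mulVec]

lemma norm_star_dotProduct_mulVec_le (G : Matrix ι κ ℂ) (M : ι → κ → ℝ)
    (hGM : ∀ i j, ‖G i j‖ ≤ M i j) (v : ι → ℂ) (w : κ → ℂ) :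
    ‖star v ⬝ᵥ G *ᵥ w‖ ≤ ∑ i, ∑ j, ‖v i‖ * M i j * ‖w j‖ := by
  simp only [dotProduct, mulVec, Pi.star_apply, Finset.mul_sum]
  refine (norm_sum_le _ _).trans (Finset.sum_le_sum fun i _ => ?_)
  refine (norm_sum_le _ _).trans (Finset.sum_le_sum fun j _ => ?_)
  rw [norm_mul, norm_mul, norm_star, ← mul_assoc]
  gcongr
  exact hGM i j

lemma norm_star_dotProduct_mulVec_le_of_forall_norm_le (G : Matrix ι κ ℂ) {μ : ℝ}
    (hG : ∀ i j, ‖G i j‖ ≤ μ) (v : ι → ℂ) (w : κ → ℂ) :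
    ‖star v ⬝ᵥ G *ᵥ w‖ ≤ μ * ((∑ i, ‖v i‖) * ∑ j, ‖w j‖) := by
  refine (norm_star_dotProduct_mulVec_le G (fun _ _ => μ) hG v w).trans_eq ?_
  rw [Finset.sum_mul_sum, Finset.mul_sum]
  refine Finset.sum_congr rfl fun i _ => ?_
  rw [Finset.mul_sum]
  exact Finset.sum_congr rfl fun j _ => by ring

lemma re_star_dotProduct_mulVec_self_ge [DecidableEq ι] (G : Matrix ι ι ℂ) {μ : ℝ}
    (hdiag : ∀ i, G i i = 1) (hoff : ∀ i j, i ≠ j → ‖G i j‖ ≤ μ) (v : ι → ℂ) :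
    (1 + μ) * ∑ i, ‖v i‖ ^ 2 - μ * (∑ i, ‖v i‖) ^ 2 ≤ (star v ⬝ᵥ G *ᵥ v).re := by
  have hsplit : star v ⬝ᵥ G *ᵥ v = star v ⬝ᵥ v + star v ⬝ᵥ (G - 1) *ᵥ v := by
    rw [sub_mulVec, one_mulVec, dotProduct_sub]; ring
  have hE : ∀ i j, ‖(G - 1) i j‖ ≤ if i = j then 0 else μ := by
    intro i j
    split_ifs with hij
    · simp [hij, hdiag]
    · simpa [one_apply_ne hij] using hoff i j hij
  have hoffsum : ∑ i, ∑ j, ‖v i‖ * (if i = j then 0 else μ) * ‖v j‖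
      = μ * (∑ i, ‖v i‖) ^ 2 - μ * ∑ i, ‖v i‖ ^ 2 := by
    have hite : ∀ i j : ι, (if i = j then 0 else μ) = μ - if i = j then μ else 0 := by
      intro i j; split_ifs <;> ring
    simp only [hite, mul_sub, sub_mul, mul_ite, ite_mul, mul_zero, zero_mul,
      Finset.sum_sub_distrib, Finset.sum_ite_eq, Finset.mem_univ, if_true, sq,
      Finset.mul_sum, Finset.sum_mul]
    refine congrArg₂ _ ?_ ?_ <;> refine Finset.sum_congr rfl fun i _ => ?_
    · exact Finset.sum_congr rfl fun j _ => by ring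
    · ring
  rw [hsplit, Complex.add_re, re_star_dotProduct_self]
  linarith [(abs_le.1 (Complex.abs_re_le_norm (star v ⬝ᵥ (G - 1) *ᵥ v))).1,
    norm_star_dotProduct_mulVec_le _ _ hE v v]

end Bilinear

lemma vnorm2_sq {n : ℕ} (v : Fin n → ℂ) : vnorm2 v ^ 2 = ∑ i, ‖v i‖ ^ 2 :=
  Real.sq_sqrt (by positivity)

lemma vnorm1_nonneg {n : ℕ} (v : Fin n → ℂ) : 0 ≤ vnorm1 v :=
  Finset.sum_nonneg fun _ _ => norm_nonneg _

lemma vnorm1_pos {n : ℕ} {v : Fin n → ℂ} (hv : v ≠ 0) : 0 < vnorm1 v := by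
  obtain ⟨i, hi⟩ := Function.ne_iff.mp hv
  exact Finset.sum_pos' (fun j _ => norm_nonneg _) ⟨i, Finset.mem_univ i, norm_pos_iff.mpr hi⟩

lemma conjTranspose_mul_self_apply_self {m : ℕ} {ι : Type*} (A : Matrix (Fin m) ι ℂ) (j : ι) :
    (Aᴴ * A) j j = ((vnorm2 fun i => A i j) ^ 2 : ℝ) := by
  simp [mul_apply, vnorm2_sq, Complex.conj_mul']

lemma sq_vnorm1_le_norm0_mul_sq_vnorm2 {n : ℕ} (v : Fin n → ℂ) :
    vnorm1 v ^ 2 ≤ norm0 v * vnorm2 v ^ 2 := by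
  have hsupp : ∀ f : ℂ → ℝ, f 0 = 0 →
      ∑ i with v i ≠ 0, f (v i) = ∑ i, f (v i) := fun f hf =>
    Finset.sum_filter_of_ne fun i _ hi hv0 => hi (by rw [hv0, hf])
  rw [vnorm1, vnorm2_sq, norm0, ← hsupp (‖·‖) norm_zero, ← hsupp (‖·‖ ^ 2) (by simp)]
  exact sq_sum_le_card_mul_sum_sq

lemma one_add_mul_sub_norm0_mul_sq_vnorm1_le {m n : ℕ} (A : Matrix (Fin m) (Fin n) ℂ)
    (hcol : ∀ j, vnorm2 (fun i => A i j) = 1) {μ : ℝ}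
    (hμ : IsGreatest {x | ∃ i j, i ≠ j ∧ x = ‖(Aᴴ * A) i j‖} μ) (v : Fin n → ℂ) :
    (1 + μ * (1 - norm0 v)) * vnorm1 v ^ 2 ≤ norm0 v * (star (A *ᵥ v) ⬝ᵥ A *ᵥ v).re := by
  have hμ0 : 0 ≤ μ := by obtain ⟨i, j, -, rfl⟩ := hμ.1; exact norm_nonneg _
  have hquad := re_star_dotProduct_mulVec_self_ge (Aᴴ * A)
    (fun j => by simp [conjTranspose_mul_self_apply_self, hcol])
    (fun i j hij => hμ.2 ⟨i, j, hij, rfl⟩) v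
  rw [← vnorm2_sq, ← star_mulVec_dotProduct_mulVec] at hquad
  change _ - μ * vnorm1 v ^ 2 ≤ _ at hquad
  have hcs := sq_vnorm1_le_norm0_mul_sq_vnorm2 v
  have hk : (0 : ℝ) ≤ norm0 v := Nat.cast_nonneg _
  nlinarith [mul_le_mul_of_nonneg_left hquad hk,
    mul_le_mul_of_nonneg_left hcs (by linarith : 0 ≤ 1 + μ)]

lemma mul_le_mul_mul_sq_of_le {a b x y s c u w : ℝ} (ha : 0 < a) (hb : 0 < b)
    (hx : 0 ≤ x) (hy : 0 ≤ y) (hxy : 0 < x ∨ 0 < y) (hu : 0 ≤ u) (hw : 0 ≤ w)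
    (hax : a * x ^ 2 ≤ u * s) (hby : b * y ^ 2 ≤ w * s) (hs : s ≤ c * (x * y)) :
    a * b ≤ u * w * c ^ 2 := by
  have hs0 : 0 < s := by
    rcases hxy with hx0 | hy0
    · exact pos_of_mul_pos_right ((by positivity : 0 < a * x ^ 2).trans_le hax) hu
    · exact pos_of_mul_pos_right ((by positivity : 0 < b * y ^ 2).trans_le hby) hw
  have hxy0 : 0 < x * y := by
    refine lt_of_le_of_ne (by positivity) fun h0 => ?_
    rw [← h0, mul_zero] at hs
    linarith
  have hsq : s ^ 2 ≤ (c * (x * y)) ^ 2 := pow_le_pow_left₀ hs0.le hs 2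
  refine le_of_mul_le_mul_right ?_ (by positivity : 0 < (x * y) ^ 2)
  calc a * b * (x * y) ^ 2 = (a * x ^ 2) * (b * y ^ 2) := by ring
    _ ≤ (u * s) * (w * s) := mul_le_mul hax hby (by positivity) (by positivity)
    _ = u * w * s ^ 2 := by ring
    _ ≤ u * w * (c * (x * y)) ^ 2 := by gcongr
    _ = u * w * c ^ 2 * (x * y) ^ 2 := by ring

theorem stmt16_general {m p q : ℕ} (A : Matrix (Fin m) (Fin p) ℂ) (B : Matrix (Fin m) (Fin q) ℂ)
    (hcolA : ∀ j, vnorm2 (fun i => A i j) = 1) (hcolB : ∀ j, vnorm2 (fun i => B i j) = 1)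
    (μA μB μbar : ℝ)
    (hμA : IsGreatest {x | ∃ i j, i ≠ j ∧ x = ‖(Aᴴ * A) i j‖} μA)
    (hμB : IsGreatest {x | ∃ i j, i ≠ j ∧ x = ‖(Bᴴ * B) i j‖} μB)
    (hμbar : IsGreatest {x | ∃ i j, x = ‖(Aᴴ * B) i j‖} μbar)
    (pv : Fin p → ℂ) (qv : Fin q → ℂ) (h : A.mulVec pv = B.mulVec qv)
    (hne : pv ≠ 0 ∨ qv ≠ 0) :
    ((norm0 pv : ℝ) * norm0 qv)
      ≥ max (1 + μA * (1 - (norm0 pv : ℝ))) 0 *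
          max (1 + μB * (1 - (norm0 qv : ℝ))) 0 / μbar ^ 2 := by
  have hSA := one_add_mul_sub_norm0_mul_sq_vnorm1_le A hcolA hμA pv
  have hSB := one_add_mul_sub_norm0_mul_sq_vnorm1_le B hcolB hμB qv
  rw [← h] at hSB
  set S := (star (A *ᵥ pv) ⬝ᵥ A *ᵥ pv).re
  have hSAB : S ≤ μbar * (vnorm1 pv * vnorm1 qv) := by
    calc S ≤ ‖star (A *ᵥ pv) ⬝ᵥ B *ᵥ qv‖ := h ▸ Complex.re_le_norm _
      _ = ‖star pv ⬝ᵥ (Aᴴ * B) *ᵥ qv‖ := by rw [star_mulVec_dotProduct_mulVec]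
      _ ≤ _ := norm_star_dotProduct_mulVec_le_of_forall_norm_le _
                (fun i j => hμbar.2 ⟨i, j, rfl⟩) pv qv
  rw [ge_iff_le]
  refine div_le_of_le_mul₀ (sq_nonneg _) (by positivity) ?_
  rcases le_or_gt (1 + μA * (1 - norm0 pv)) 0 with htA | htA
  · rw [max_eq_right htA, zero_mul]; positivity
  rcases le_or_gt (1 + μB * (1 - norm0 qv)) 0 with htB | htB
  · rw [max_eq_right htB, mul_zero]; positivity
  rw [max_eq_left htA.le, max_eq_left htB.le]
  exact mul_le_mul_mul_sq_of_le htA htB (vnorm1_nonneg pv) (vnorm1_nonneg qv)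
    (hne.imp vnorm1_pos vnorm1_pos) (by positivity) (by positivity) hSA hSB hSAB

theorem stmt16 {m p q : ℕ} (A : Matrix (Fin m) (Fin p) ℂ) (B : Matrix (Fin m) (Fin q) ℂ)
    (hcolA : ∀ j, vnorm2 (fun i => A i j) = 1) (hcolB : ∀ j, vnorm2 (fun i => B i j) = 1)
    (μA μB μbar : ℝ)
    (hμA : IsGreatest {x | ∃ i j, i ≠ j ∧ x = ‖(Aᴴ * A) i j‖} μA)
    (hμB : IsGreatest {x | ∃ i j, i ≠ j ∧ x = ‖(Bᴴ * B) i j‖} μB)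
    (hμbar : IsGreatest {x | ∃ i j, x = ‖(Aᴴ * B) i j‖} μbar)
    (hμbarpos : 0 < μbar)
    (pv : Fin p → ℂ) (qv : Fin q → ℂ) (h : A.mulVec pv = B.mulVec qv)
    (hne : pv ≠ 0 ∨ qv ≠ 0) :
    ((norm0 pv : ℝ) * norm0 qv)
      ≥ max (1 + μA * (1 - (norm0 pv : ℝ))) 0 *
          max (1 + μB * (1 - (norm0 qv : ℝ))) 0 / μbar ^ 2 :=
  stmt16_general A B hcolA hcolB μA μB μbar hμA hμB hμbar pv qv h hne
end
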